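/- arXiv:2511.16488 — 2 statements merged into one kernel-verified Lean document; each statement's English description precedes it below -/
import Mathlib

section
/- Completeness of END with respect to finite neighborhood frames: for every modal formula A, if A is valid in every finite END-frame (i.e., every END-frame whose set of worlds is finite), then A is derivable in the logic END. -/
/-- Modal formulas: propositional variables, ⊥, ¬, ∧, ∨, →, □. -/
inductive MF : Type
  | var : ℕ → MF
  | bot : MF
  | neg : MF → MF
  | and : MF → MF → MF
  | or : MF → MF → MF
  | imp : MF → MF → MF
  | box : MF → MF

/-- Defined biconditional A ↔ B := (A → B) ∧ (B → A). -/
def MF.iff (A B : MF) : MF := (A.imp B).and (B.imp A)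

/-- Propositional evaluation: variables and boxed formulas are treated as atoms. -/
def MF.peval (v : MF → Bool) : MF → Bool
  | .var n => v (.var n)
  | .bot => false
  | .neg A => !(A.peval v)
  | .and A B => A.peval v && B.peval v
  | .or A B => A.peval v || B.peval v
  | .imp A B => !(A.peval v) || B.peval v
  | .box A => v A.box

/-- A is a propositional tautology. -/
def MF.Tautology (A : MF) : Prop := ∀ v : MF → Bool, A.peval v = true

/-- The logic END: EN plus the axiom scheme ¬(□A ∧ □¬A). -/
inductive END : MF → Prop
  | taut {A : MF} : A.Tautology → END A
  | axD {A : MF} : END (A.box.and A.neg.box).neg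
  | mp {A B : MF} : END (A.imp B) → END A → END B
  | nec {A : MF} : END A → END A.box
  | re {A B : MF} : END (A.iff B) → END (A.box.iff B.box)

/-- An EN-frame: a (nonempty) set of worlds `W` together with a neighborhood
function `N` such that the whole universe is a neighborhood of every world. -/
structure ENFrame (W : Type*) where
  N : W → Set (Set W)
  univ_mem : ∀ x : W, (Set.univ : Set W) ∈ N x

/-- The truth set of a modal formula in a model (frame + valuation). -/
def ENFrame.truth {W : Type*} (F : ENFrame W) (val : ℕ → Set W) : MF → Set W
  | .var n => val n
  | .bot => ∅
  | .neg A => (F.truth val A)ᶜ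
  | .and A B => F.truth val A ∩ F.truth val B
  | .or A B => F.truth val A ∪ F.truth val B
  | .imp A B => {x | x ∈ F.truth val A → x ∈ F.truth val B}
  | .box A => {x | F.truth val A ∈ F.N x}

/-- A formula is valid in a frame if it is valid (true at every world) in
every model on that frame. -/
def ENFrame.Valid {W : Type*} (F : ENFrame W) (A : MF) : Prop :=
  ∀ val : ℕ → Set W, F.truth val A = Set.univ

/-- ENP-frame condition: the empty set is never a neighborhood. -/
def ENFrame.IsENP {W : Type*} (F : ENFrame W) : Prop :=
  ∀ x : W, (∅ : Set W) ∉ F.N x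

/-- END-frame condition: no set is a neighborhood together with its complement. -/
def ENFrame.IsEND {W : Type*} (F : ENFrame W) : Prop :=
  ∀ (x : W) (V : Set W), V ∈ F.N x → Vᶜ ∉ F.N x

/-- ECN-frame condition: neighborhoods are closed under intersection. -/
def ENFrame.IsECN {W : Type*} (F : ENFrame W) : Prop :=
  ∀ (x : W) (U V : Set W), U ∈ F.N x → V ∈ F.N x → U ∩ V ∈ F.N x

/-!
A finite canonical model. Fix the finite set `S` of atoms (variables and boxed formulas) of
subformulas of `A`; the worlds are the consistent truth assignments `s` to `S`, and `V` is a
neighbourhood of `s` when `V` is the truth set of some `B` such that `⊢ χₛ → □B`, where `χₛ` is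
the characteristic formula of `s`. A formula over `S` true under every consistent assignment is
provable, being a tautological consequence of the provable formulas `¬χₛ` for the inconsistent
`s`; hence equal truth sets give provably equivalent formulas, and RE yields the truth lemma for
`□`. If `V` and its complement were both neighbourhoods of `s`, RE and the axiom `¬(□B ∧ □¬B)`
would make `s` inconsistent.
-/

deriving instance DecidableEq for MF

namespace MF

def top : MF := bot.neg

/-- The variables and boxed formulas occurring in `A` outside the scope of any `□`:
the atoms of `A` read as a propositional formula. -/
def atoms : MF → Finset MF
  | var n => {var n}
  | bot => ∅
  | neg A => A.atoms
  | and A B => A.atoms ∪ B.atoms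
  | or A B => A.atoms ∪ B.atoms
  | imp A B => A.atoms ∪ B.atoms
  | box A => {box A}

def subAtoms : MF → Finset MF
  | var n => {var n}
  | bot => ∅
  | neg A => A.subAtoms
  | and A B => A.subAtoms ∪ B.subAtoms
  | or A B => A.subAtoms ∪ B.subAtoms
  | imp A B => A.subAtoms ∪ B.subAtoms
  | box A => insert (box A) A.subAtoms

theorem atoms_subset_subAtoms : ∀ A : MF, A.atoms ⊆ A.subAtoms
  | var _ | bot | box _ => by simp [atoms, subAtoms]
  | neg A => A.atoms_subset_subAtoms
  | and A B | or A B | imp A B =>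
    Finset.union_subset_union A.atoms_subset_subAtoms B.atoms_subset_subAtoms

theorem peval_of_mem_atoms {A B : MF} (hB : B ∈ A.atoms) (u : MF → Bool) :
    B.peval u = u B := by
  induction A with
  | var | box => simp_all [atoms, peval]
  | bot => simp [atoms] at hB
  | neg A ih => exact ih hB
  | and A C ihA ihC | or A C ihA ihC | imp A C ihA ihC =>
    simp only [atoms, Finset.mem_union] at hB
    exact hB.elim ihA ihC

theorem peval_congr {A : MF} {u v : MF → Bool} (h : ∀ B ∈ A.atoms, u B = v B) :
    A.peval u = A.peval v := by
  induction A with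
  | var | box => simpa [atoms, peval] using h
  | bot => rfl
  | neg A ih => simp only [peval, ih h]
  | and A C ihA ihC | or A C ihA ihC | imp A C ihA ihC =>
    simp only [atoms, Finset.mem_union] at h
    simp only [peval, ihA fun B hB => h B (.inl hB), ihC fun B hB => h B (.inr hB)]

def conj (l : List MF) : MF := l.foldr MF.and top

theorem peval_conj {l : List MF} {u : MF → Bool} :
    (conj l).peval u = true ↔ ∀ A ∈ l, A.peval u = true := by
  induction l with
  | nil => simp [conj, top, peval]
  | cons A l ih => simp [conj, peval, ← ih]

end MF

open MF

theorem END.of_tautological_consequence {Γ : List MF} {D : MF} (hΓ : ∀ A ∈ Γ, END A)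
    (h : ∀ u, (∀ A ∈ Γ, A.peval u = true) → D.peval u = true) : END D := by
  induction Γ generalizing D with
  | nil => exact END.taut fun u => h u (by simp)
  | cons A Γ ih =>
    refine END.mp (ih (fun B hB => hΓ B (.tail A hB)) fun u hu => ?_) (hΓ A (.head Γ))
    cases hA : A.peval u
    · simp [peval, hA]
    · simp [peval, hA, h u (by simp_all)]

theorem END.imp_intro {χ A : MF} (h : END A) : END (χ.imp A) :=
  END.of_tautological_consequence (Γ := [A]) (by simpa) fun u hu => by simp_all [peval]

theorem END.imp_of_tautological_consequence {χ D : MF} {Γ : List MF}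
    (hΓ : ∀ A ∈ Γ, END (χ.imp A))
    (h : ∀ u, (∀ A ∈ Γ, A.peval u = true) → D.peval u = true) : END (χ.imp D) := by
  refine END.of_tautological_consequence (Γ := Γ.map χ.imp) (by simpa using hΓ) fun u hu => ?_
  cases hχ : χ.peval u
  · simp [peval, hχ]
  · simp_all [peval]

section Canonical

variable (S : Finset MF)

def memVal (s : Finset MF) : MF → Bool := fun B => decide (B ∈ s)

noncomputable def charFormula (s : Finset MF) : MF :=
  conj (S.toList.map fun B => if B ∈ s then B else B.neg)

theorem peval_charFormula {s : Finset MF} {u : MF → Bool} :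
    (charFormula S s).peval u = true ↔ ∀ B ∈ S, B.peval u = decide (B ∈ s) := by
  simp only [charFormula, peval_conj, List.mem_map, Finset.mem_toList, forall_exists_index,
    and_imp, forall_apply_eq_imp_iff₂]
  refine forall₂_congr fun B _ => ?_
  by_cases hB : B ∈ s <;> simp [hB, peval]

def Consistent (s : Finset MF) : Prop := ¬ END (charFormula S s).neg

variable {S}

theorem peval_memVal_eq {s : Finset MF} {u : MF → Bool} {E : MF} (hE : E.atoms ⊆ S)
    (hu : (charFormula S s).peval u = true) : E.peval (memVal s) = E.peval u :=
  peval_congr fun C hC => by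
    rw [memVal, ← (peval_charFormula S).1 hu C (hE hC), peval_of_mem_atoms hC]

theorem END_of_forall_consistent {D : MF} (hD : D.atoms ⊆ S)
    (h : ∀ s ⊆ S, Consistent S s → D.peval (memVal s) = true) : END D := by
  classical
  refine END.of_tautological_consequence
    (Γ := ((S.powerset.filter (¬ Consistent S ·)).toList.map fun s => (charFormula S s).neg))
    (by
      simp only [List.mem_map, Finset.mem_toList, Finset.mem_filter, Consistent, not_not]
      rintro _ ⟨s, ⟨-, hs⟩, rfl⟩
      exact hs) fun u hu => ?_
  set s := S.filter (·.peval u = true)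
  have hs : (charFormula S s).peval u = true :=
    (peval_charFormula S).2 fun B hB => by by_cases h : B.peval u <;> simp [s, hB, h]
  by_cases hcon : Consistent S s
  · rw [← peval_memVal_eq hD hs]
    exact h s (Finset.filter_subset _ _) hcon
  · have : (charFormula S s).neg.peval u = true := hu _ (List.mem_map_of_mem (Finset.mem_toList.2
      (Finset.mem_filter.2 ⟨Finset.mem_powerset.2 (Finset.filter_subset _ _), hcon⟩)))
    simp [peval, hs] at this

theorem peval_memVal_of_END {s : Finset MF} (hs : Consistent S s) {E : MF} (hE : E.atoms ⊆ S)
    (h : END ((charFormula S s).imp E)) : E.peval (memVal s) = true := by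
  by_contra hEs
  refine hs (END.of_tautological_consequence (Γ := [(charFormula S s).imp E]) (by simpa)
    fun u hu => ?_)
  cases hχ : (charFormula S s).peval u
  · simp [peval, hχ]
  · simp_all [peval, ← peval_memVal_eq hE hχ]

theorem END_imp_of_mem {s : Finset MF} {B : MF} (hBS : B ∈ S) (hBs : B ∈ s) :
    END ((charFormula S s).imp B) :=
  END.taut fun u => by
    cases hχ : (charFormula S s).peval u
    · simp [peval, hχ]
    · simp [peval, (peval_charFormula S).1 hχ B hBS, hBs]

variable (S)

def CanonicalWorld : Type := {s : Finset MF // s ⊆ S ∧ Consistent S s}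

instance : Finite (CanonicalWorld S) :=
  (S.powerset.finite_toSet.subset fun _ hs => Finset.mem_powerset.2 hs.1).to_subtype

def truthSet (B : MF) : Set (CanonicalWorld S) := {x | B.peval (memVal x.1) = true}

variable {S}

theorem END_iff_of_truthSet_eq {B C : MF} (hB : B.atoms ⊆ S) (hC : C.atoms ⊆ S)
    (h : truthSet S B = truthSet S C) : END (B.iff C) := by
  have hBC : (B.iff C).atoms ⊆ S := by
    simp only [MF.iff, atoms, Finset.union_subset_iff]
    exact ⟨⟨hB, hC⟩, hC, hB⟩
  refine END_of_forall_consistent hBC fun s hsS hs => ?_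
  have : B.peval (memVal s) = C.peval (memVal s) :=
    Bool.eq_iff_iff.2 (Set.ext_iff.1 h ⟨s, hsS, hs⟩)
  simp [MF.iff, peval, this]

variable (S)

def canonicalFrame : ENFrame (CanonicalWorld S) where
  N x := {V | ∃ B, B.atoms ⊆ S ∧ V = truthSet S B ∧ END ((charFormula S x.1).imp B.box)}
  univ_mem _ := ⟨top, by simp [top, atoms], by ext; simp [truthSet, top, peval],
    END.imp_intro (END.nec (END.taut fun _ => by simp [top, peval]))⟩

theorem canonicalFrame_isEND : (canonicalFrame S).IsEND := by
  rintro ⟨s, hsS, hs⟩ _ ⟨B, hB, rfl, hBbox⟩ ⟨C, hC, hBC, hCbox⟩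
  have hCB : truthSet S C = truthSet S B.neg := by
    rw [← hBC]; ext; simp [truthSet, peval]
  have hiff : END (C.box.iff B.neg.box) :=
    END.re (END_iff_of_truthSet_eq hC (by simpa [atoms] using hB) hCB)
  have hbot : END ((charFormula S s).imp bot) :=
    END.imp_of_tautological_consequence
      (Γ := [B.box, C.box, C.box.iff B.neg.box, (B.box.and B.neg.box).neg])
      (by simp [hBbox, hCbox, END.imp_intro, hiff, END.axD]) fun u hu => by
        simp [MF.iff, peval] at hu ⊢
        grind
  simpa [peval] using peval_memVal_of_END hs (by simp [atoms]) hbot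

theorem truth_canonicalFrame {B : MF} (hB : B.subAtoms ⊆ S) :
    (canonicalFrame S).truth (fun n => truthSet S (var n)) B = truthSet S B := by
  induction B with
  | var n => rfl
  | bot => ext; simp [ENFrame.truth, truthSet, peval]
  | neg B ih =>
    simp only [ENFrame.truth, ih hB]
    ext; simp [truthSet, peval]
  | and B C ihB ihC | or B C ihB ihC | imp B C ihB ihC =>
    simp only [subAtoms, Finset.union_subset_iff] at hB
    simp only [ENFrame.truth, ihB hB.1, ihC hB.2]
    ext; simp [truthSet, peval, imp_iff_not_or]
  | box B ih =>
    simp only [subAtoms, Finset.insert_subset_iff] at hB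
    ext ⟨s, hsS, hs⟩
    simp only [ENFrame.truth, ih hB.2]
    change truthSet S B ∈ (canonicalFrame S).N ⟨s, hsS, hs⟩ ↔ B.box.peval (memVal s) = true
    constructor
    · rintro ⟨C, hC, hBC, hCbox⟩
      have hiff : END (B.box.iff C.box) :=
        END.re (END_iff_of_truthSet_eq ((atoms_subset_subAtoms B).trans hB.2) hC hBC)
      refine peval_memVal_of_END hs (by simpa [atoms] using hB.1)
        (END.imp_of_tautological_consequence (Γ := [C.box, B.box.iff C.box])
          (by simp [hCbox, END.imp_intro hiff]) fun u hu => ?_)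
      simp [MF.iff, peval] at hu ⊢
      grind
    · intro hBs
      exact ⟨B, (atoms_subset_subAtoms B).trans hB.2, rfl,
        END_imp_of_mem hB.1 (by simpa [memVal, peval] using hBs)⟩

end Canonical

/-- Completeness of END with respect to finite END-frames. -/
theorem END_completeness (A : MF)
    (h : ∀ (W : Type) [Nonempty W] [Finite W] (F : ENFrame W), F.IsEND → F.Valid A) :
    END A := by
  refine END_of_forall_consistent A.atoms_subset_subAtoms fun s hsS hs => ?_
  let x : CanonicalWorld A.subAtoms := ⟨s, hsS, hs⟩
  have : Nonempty (CanonicalWorld A.subAtoms) := ⟨x⟩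
  have hvalid := h _ (canonicalFrame A.subAtoms) (canonicalFrame_isEND _)
    (fun n => truthSet _ (var n))
  rw [truth_canonicalFrame _ subset_rfl] at hvalid
  exact (hvalid ▸ Set.mem_univ x : x ∈ truthSet _ A)
end

section
/- Completeness of ECNP with respect to finite neighborhood frames: for every modal formula A, if A is valid in every finite ECNP-frame (i.e., every ECNP-frame whose set of worlds is finite), then A is derivable in the logic ECNP. -/
/-- The logic ECNP: ECN plus the axiom ¬□⊥. -/
inductive ECNP : MF → Prop
  | taut {A : MF} : A.Tautology → ECNP A
  | axC {A B : MF} : ECNP ((A.box.and B.box).imp (A.and B).box)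
  | axP : ECNP MF.bot.box.neg
  | mp {A B : MF} : ECNP (A.imp B) → ECNP A → ECNP B
  | nec {A : MF} : ECNP A → ECNP A.box
  | re {A B : MF} : ECNP (A.iff B) → ECNP (A.box.iff B.box)

/-!
The proof builds a finite canonical model from the subformulas `Φ` of `A`, without
Lindenbaum's lemma. Its worlds are the sets `s ⊆ Φ` whose diagram (the conjunction of the members
of `s` and of the negations of the other formulas of `Φ`) is consistent, and a formula that holds
under every valuation with a consistent state over `Φ` is derivable.

The neighbourhoods of a world `w` are the finite intersections of truth sets of formulas `D ∈ Φ`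
with `□D ∈ w`, so the frame is closed under intersections by construction; axiom C turns
`□D₁ ∧ ⋯ ∧ □Dₙ` into `□(D₁ ∧ ⋯ ∧ Dₙ)`. If the truth set of `C` is such an intersection, then
`C ↔ D₁ ∧ ⋯ ∧ Dₙ` is derivable and RE gives `□C ∈ w`, which is the modal case of the truth lemma.
If the intersection is empty, RE and `¬□⊥` make `w` inconsistent, so `∅` is no neighbourhood.
-/

deriving instance DecidableEq for MF

def MF.conj_s9 : List MF → MF
  | [] => MF.bot.neg
  | B :: L => B.and (MF.conj_s9 L)

@[simp]
theorem MF.peval_iff (v : MF → Bool) (A B : MF) :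
    (A.iff B).peval v = true ↔ (A.peval v = true ↔ B.peval v = true) := by
  cases hA : A.peval v <;> cases hB : B.peval v <;> simp [MF.iff, MF.peval, hA, hB]

@[simp]
theorem MF.peval_conj_s9 (v : MF → Bool) (L : List MF) :
    (MF.conj_s9 L).peval v = true ↔ ∀ B ∈ L, B.peval v = true := by
  induction L with
  | nil => simp [MF.conj_s9, MF.peval]
  | cons B L ih => simp [MF.conj_s9, MF.peval, ih]

def MF.subformulas : MF → List MF
  | .var n => [.var n]
  | .bot => [.bot]
  | .neg B => .neg B :: B.subformulas
  | .and B C => .and B C :: (B.subformulas ++ C.subformulas)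
  | .or B C => .or B C :: (B.subformulas ++ C.subformulas)
  | .imp B C => .imp B C :: (B.subformulas ++ C.subformulas)
  | .box B => .box B :: B.subformulas

theorem MF.mem_subformulas_self (B : MF) : B ∈ B.subformulas := by
  cases B <;> simp [MF.subformulas]

namespace ECNP

theorem of_forall_peval {Γ : List MF} {B : MF} (hΓ : ∀ C ∈ Γ, ECNP C)
    (h : ∀ v, (∀ C ∈ Γ, C.peval v = true) → B.peval v = true) : ECNP B := by
  induction Γ generalizing B with
  | nil => exact taut fun v => h v (by simp)
  | cons C Γ ih =>
    refine mp (ih (fun D hD => hΓ D (List.mem_cons_of_mem C hD)) fun v hv => ?_)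
      (hΓ C List.mem_cons_self)
    cases hC : C.peval v
    · simp [MF.peval, hC]
    · simpa [MF.peval, hC] using h v (by simpa [hC] using hv)

theorem imp_of_forall_peval {Γ : List MF} {A B : MF} (hΓ : ∀ C ∈ Γ, ECNP C)
    (h : ∀ v, (∀ C ∈ Γ, C.peval v = true) → A.peval v = true → B.peval v = true) :
    ECNP (A.imp B) :=
  of_forall_peval hΓ fun v hv => by
    cases hA : A.peval v
    · simp [MF.peval, hA]
    · simp [MF.peval, h v hv hA]

theorem conj_box_imp_box_conj (T : List MF) :
    ECNP ((MF.conj_s9 (T.map MF.box)).imp (MF.conj_s9 T).box) := by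
  induction T with
  | nil =>
    have hTop : ECNP (MF.conj_s9 []).box := nec (taut fun v => by simp)
    exact of_forall_peval (Γ := [_]) (by simpa using hTop) fun v hv => by simp_all [MF.peval]
  | cons D T ih =>
    exact of_forall_peval (Γ := [_, _]) (by simpa using ⟨ih, axC (A := D) (B := MF.conj_s9 T)⟩)
      fun v hv => by
        simp only [List.forall_mem_cons] at hv
        grind [MF.peval, MF.conj_s9]

end ECNP

namespace Canonical

variable (Φ : List MF)

def diagram (s : Finset MF) : MF :=
  MF.conj_s9 (Φ.map fun B => if B ∈ s then B else B.neg)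

def state (v : MF → Bool) : Finset MF :=
  Φ.toFinset.filter fun B => B.peval v = true

def Consistent (s : Finset MF) : Prop :=
  ¬ ECNP ((diagram Φ s).imp .bot)

variable {Φ}

@[simp]
theorem mem_state {v : MF → Bool} {B : MF} : B ∈ state Φ v ↔ B ∈ Φ ∧ B.peval v = true := by
  simp [state]

theorem peval_diagram {s : Finset MF} {v : MF → Bool} :
    (diagram Φ s).peval v = true ↔ ∀ B ∈ Φ, (B ∈ s ↔ B.peval v = true) := by
  simp only [diagram, MF.peval_conj_s9, List.forall_mem_map]
  refine forall₂_congr fun B _ => ?_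
  split_ifs with h <;> simp [MF.peval, h]

theorem peval_diagram_iff_eq_state {s : Finset MF} (hs : s ⊆ Φ.toFinset) {v : MF → Bool} :
    (diagram Φ s).peval v = true ↔ s = state Φ v := by
  rw [peval_diagram]
  constructor
  · intro h
    ext B
    rw [mem_state]
    exact ⟨fun hB => ⟨List.mem_toFinset.1 (hs hB), (h B (List.mem_toFinset.1 (hs hB))).1 hB⟩,
      fun hB => (h B hB.1).2 hB.2⟩
  · rintro rfl B hB
    simp [hB]

theorem state_subset (v : MF → Bool) : state Φ v ⊆ Φ.toFinset :=
  Finset.filter_subset _ _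

theorem peval_diagram_state (v : MF → Bool) : (diagram Φ (state Φ v)).peval v = true :=
  (peval_diagram_iff_eq_state (state_subset v)).2 rfl

-- `φ` is a propositional consequence of the refutations of the finitely many inconsistent
-- diagrams, since every valuation satisfies the diagram of its own state.
theorem derivable_of_forall_consistent {φ : MF}
    (h : ∀ v, Consistent Φ (state Φ v) → φ.peval v = true) : ECNP φ := by
  classical
  let inconsistent := Φ.toFinset.powerset.filter fun s => ¬ Consistent Φ s
  refine ECNP.of_forall_peval (Γ := inconsistent.toList.map fun s => (diagram Φ s).imp .bot)
    (fun C hC => ?_) fun v hv => ?_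
  · obtain ⟨s, hs, rfl⟩ := List.mem_map.1 hC
    exact not_not.1 (Finset.mem_filter.1 (Finset.mem_toList.1 hs)).2
  by_contra hφ
  have hmem : state Φ v ∈ inconsistent := by
    simpa [inconsistent, state] using fun hcon => hφ (h v hcon)
  have hneg := hv _ (List.mem_map.2 ⟨_, Finset.mem_toList.2 hmem, rfl⟩)
  simp [MF.peval, peval_diagram_state] at hneg

variable (Φ) in
def World : Type :=
  {s : Finset MF // s ⊆ Φ.toFinset ∧ Consistent Φ s}

instance : Finite (World Φ) :=
  Finite.of_injective
    (fun w : World Φ => (⟨w.1, Finset.mem_powerset.2 w.2.1⟩ : Φ.toFinset.powerset))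
    fun _ _ h => Subtype.ext (Subtype.mk.inj h)

namespace World

def ofValuation (v : MF → Bool) (hv : Consistent Φ (state Φ v)) : World Φ :=
  ⟨state Φ v, state_subset v, hv⟩

@[simp]
theorem mem_ofValuation {v : MF → Bool} {hv : Consistent Φ (state Φ v)} {B : MF} :
    B ∈ (ofValuation v hv).1 ↔ B ∈ Φ ∧ B.peval v = true :=
  mem_state

theorem exists_eq_state (w : World Φ) : ∃ v, w.1 = state Φ v := by
  by_contra! h
  exact w.2.2 (ECNP.taut fun v => by
    simpa [MF.peval] using mt (peval_diagram_iff_eq_state w.2.1).1 (h v))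

theorem mem_of_derivable (w : World Φ) {B : MF} (hB : B ∈ Φ)
    (h : ECNP ((diagram Φ w.1).imp B)) : B ∈ w.1 := by
  by_contra hn
  refine w.2.2 (ECNP.imp_of_forall_peval (Γ := [_]) (by simpa using h) fun v hv hδ => ?_)
  exact (hn ((peval_diagram.1 hδ B hB).2 (by simpa [MF.peval, hδ] using hv))).elim

theorem derivable_imp_box_conj (w : World Φ) {T : List MF} (hT : ∀ D ∈ T, D.box ∈ w.1) :
    ECNP ((diagram Φ w.1).imp (MF.conj_s9 T).box) := by
  refine ECNP.imp_of_forall_peval (Γ := [_]) (by simpa using ECNP.conj_box_imp_box_conj T)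
    fun v hv hδ => ?_
  have hboxes : (MF.conj_s9 (T.map MF.box)).peval v = true := by
    simp only [MF.peval_conj_s9, List.forall_mem_map]
    exact fun D hD => (peval_diagram.1 hδ _ (List.mem_toFinset.1 (w.2.1 (hT D hD)))).1 (hT D hD)
  simpa [MF.peval, hboxes] using hv

end World

variable (Φ) in
def frame : ENFrame (World Φ) where
  N w := {X | ∃ T : List MF, (∀ D ∈ T, D ∈ Φ ∧ D.box ∈ w.1) ∧ X = {u | ∀ D ∈ T, D ∈ u.1}}
  univ_mem _ := ⟨[], by simp, by simp⟩

theorem frame_isECN : (frame Φ).IsECN := by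
  rintro w _ _ ⟨T₁, h₁, rfl⟩ ⟨T₂, h₂, rfl⟩
  refine ⟨T₁ ++ T₂, fun D hD => ?_, ?_⟩
  · rcases List.mem_append.1 hD with hD | hD
    exacts [h₁ D hD, h₂ D hD]
  · ext u
    simp [or_imp, forall_and]

theorem frame_isENP : (frame Φ).IsENP := by
  rintro w ⟨T, hT, hE⟩
  have hrefute : ECNP ((MF.conj_s9 T).iff .bot) := derivable_of_forall_consistent fun v hv => by
    have hu : World.ofValuation v hv ∉ ({u | ∀ D ∈ T, D ∈ u.1} : Set (World Φ)) :=
      hE ▸ Set.notMem_empty _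
    simp_all [MF.peval]
  refine w.2.2 (ECNP.imp_of_forall_peval (Γ := [_, _, _])
    (by simpa using ⟨w.derivable_imp_box_conj fun D hD => (hT D hD).2, ECNP.re hrefute, ECNP.axP⟩)
    fun v hv _ => ?_)
  simp only [List.forall_mem_cons] at hv
  grind [MF.iff, MF.peval]

theorem setOf_mem_frame_N_iff (w : World Φ) {C : MF} (hC : C ∈ Φ) (hCbox : C.box ∈ Φ) :
    {u : World Φ | C ∈ u.1} ∈ (frame Φ).N w ↔ C.box ∈ w.1 := by
  constructor
  · rintro ⟨T, hT, hE⟩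
    have hiff : ECNP (C.iff (MF.conj_s9 T)) := derivable_of_forall_consistent fun v hv => by
      have hu : C ∈ Φ ∧ C.peval v = true ↔ ∀ D ∈ T, D ∈ Φ ∧ D.peval v = true := by
        simpa using congrArg (World.ofValuation v hv ∈ ·) hE
      rw [MF.peval_iff, MF.peval_conj_s9, ← and_iff_right hC (b := C.peval v = true), hu]
      exact forall₂_congr fun D hD => and_iff_right (hT D hD).1
    refine w.mem_of_derivable hCbox (ECNP.imp_of_forall_peval (Γ := [_, _])
      (by simpa using ⟨w.derivable_imp_box_conj fun D hD => (hT D hD).2, ECNP.re hiff⟩)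
      fun v hv _ => ?_)
    simp only [List.forall_mem_cons] at hv
    grind [MF.iff, MF.peval]
  · exact fun h => ⟨[C], by simp [hC, h], by simp⟩

variable (Φ) in
def val (n : ℕ) : Set (World Φ) :=
  {w | MF.var n ∈ w.1}

theorem truth_eq {B : MF} (hB : B.subformulas ⊆ Φ) :
    (frame Φ).truth (val Φ) B = {w | B ∈ w.1} := by
  induction B with
  | var n => rfl
  | box C ih =>
    simp only [MF.subformulas, List.cons_subset] at hB
    ext w
    simp only [ENFrame.truth, ih hB.2, Set.mem_ofPred_eq]
    exact setOf_mem_frame_N_iff w (hB.2 (MF.mem_subformulas_self C)) hB.1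
  | _ =>
    simp only [MF.subformulas, List.cons_subset, List.append_subset] at hB
    ext w
    obtain ⟨v, hv⟩ := w.exists_eq_state
    have hΦ (C : MF) (hC : C.subformulas ⊆ Φ) : C ∈ Φ := hC (MF.mem_subformulas_self C)
    simp [ENFrame.truth, MF.peval, imp_iff_not_or, *]

end Canonical

/-- Completeness of ECNP with respect to finite ECNP-frames. -/
theorem ECNP_completeness (A : MF)
    (h : ∀ (W : Type) [Nonempty W] [Finite W] (F : ENFrame W),
      F.IsECN → F.IsENP → F.Valid A) :
    ECNP A := by
  open Canonical in
  refine derivable_of_forall_consistent (Φ := A.subformulas) fun v hv => ?_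
  have : Nonempty (World A.subformulas) := ⟨World.ofValuation v hv⟩
  have hvalid := h _ (frame A.subformulas) frame_isECN frame_isENP (val _)
  rw [truth_eq (List.Subset.refl _)] at hvalid
  have hA : A ∈ (World.ofValuation v hv).1 :=
    Set.eq_univ_iff_forall.1 hvalid (World.ofValuation v hv)
  exact (World.mem_ofValuation.1 hA).2
end
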